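/- For each i = 1,…,N let U_i be a unitary n×n matrix and let G_i be a linear map on n×n matrices of the form G_i(σ) = Σₐ q_i(a) W_{i,a} σ W_{i,a}† with the W_{i,a} unitary and q_i probability distributions; let W̄_i = Σₐ q_i(a)W_{i,a} and δ_i = Σₐ q_i(a)‖W_{i,a} − W̄_i‖². Then for any density matrix ρ (positive semidefinite with trace 1), the trace norm of U_N⋯U₁ ρ U₁†⋯U_N† − (G_N ∘ ⋯ ∘ G₁)(ρ) is at most Σᵢ (δ_i + 2‖W̄_i − U_i‖). -/

import Mathlib

open scoped Matrix.Norms.L2Operator ComplexOrder Kronecker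
open Matrix Complex

/-- The trace norm (sum of singular values) of a square complex matrix. -/
noncomputable def traceNorm {n : Type*} [Fintype n] [DecidableEq n] (A : Matrix n n ℂ) : ℝ :=
  (((Matrix.posSemidef_conjTranspose_mul_self A).1.eigenvectorUnitary : Matrix n n ℂ) *
      diagonal (((↑) : ℝ → ℂ) ∘ (√·) ∘ (Matrix.posSemidef_conjTranspose_mul_self A).1.eigenvalues) *
      (star (Matrix.posSemidef_conjTranspose_mul_self A).1.eigenvectorUnitary : Matrix n n ℂ)).trace.re

/-!
Peel off the outermost step: if `σ` is the ideal state produced by the other unitaries, the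
total error is `(U σ Uᴴ - G σ) + G (error of the other steps)`, and a mixed-unitary channel `G`
does not increase the trace norm, so the one-step errors add up. For one step, with `W̄ = ∑ q W`,
  `U σ Uᴴ - G σ = (U - W̄) σ Uᴴ + W̄ σ (U - W̄)ᴴ - ∑ q (W - W̄) σ (W - W̄)ᴴ`,
and `‖L σ R‖₁ ≤ ‖L‖ ‖R‖ ‖σ‖₁` bounds the three terms by `‖W̄ - U‖`, `‖W̄ - U‖` and `δ`.

The trace-norm inequalities come from the duality `‖X‖₁ = max {re tr (B X) | ‖B‖ ≤ 1}`, which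
rests on the polar decomposition `X = C |X|` with a contraction `C` satisfying `Cᴴ X = |X|`.
-/

open scoped MatrixOrder

lemma CStarRing.norm_le_one_of_mem_unitary {E : Type*} [NormedRing E] [StarRing E] [CStarRing E]
    {U : E} (hU : U ∈ unitary E) : ‖U‖ ≤ 1 := by
  cases subsingleton_or_nontrivial E
  · simp [Subsingleton.elim U 0]
  · exact (CStarRing.norm_of_mem_unitary hU).le

lemma norm_sum_smul_le_one {E κ : Type*} [SeminormedAddCommGroup E] [NormedSpace ℂ E] [Fintype κ]
    {W : κ → E} (hW : ∀ a, ‖W a‖ ≤ 1) {q : κ → ℝ} (hq0 : ∀ a, 0 ≤ q a)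
    (hq1 : ∑ a, q a = 1) : ‖∑ a, (q a : ℂ) • W a‖ ≤ 1 :=
  calc ‖∑ a, (q a : ℂ) • W a‖ ≤ ∑ a, q a * ‖W a‖ := by
        refine (norm_sum_le _ _).trans (Finset.sum_le_sum fun a _ => ?_)
        rw [norm_smul, Complex.norm_real, Real.norm_of_nonneg (hq0 a)]
    _ ≤ ∑ a, q a := Finset.sum_le_sum fun a _ => mul_le_of_le_one_right (hq0 a) (hW a)
    _ = 1 := hq1

namespace Matrix

variable {ι : Type*} [Fintype ι]

lemma re_trace_le_re_trace {A B : Matrix ι ι ℂ} (h : A ≤ B) : A.trace.re ≤ B.trace.re :=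
  (Complex.le_def.mp ((tracePositiveLinearMap ι ℝ ℂ).monotone h)).1

variable [DecidableEq ι]

lemma re_trace_mul_le_of_nonneg (C : Matrix ι ι ℂ) {S : Matrix ι ι ℂ} (hS : 0 ≤ S) :
    (C * S).trace.re ≤ ‖C‖ * S.trace.re := by
  obtain ⟨s, hs, rfl⟩ : ∃ s : Matrix ι ι ℂ, IsSelfAdjoint s ∧ S = s * s :=
    ⟨CFC.sqrt S, (CFC.sqrt_nonneg S).isSelfAdjoint, (CFC.sqrt_mul_sqrt_self S).symm⟩
  -- `2 re tr (C s²) = tr (s H s)` for the self-adjoint `H = C + Cᴴ`, and `H ≤ ‖H‖ • 1`.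
  set H := C + star C with hH
  have hHsa : IsSelfAdjoint H := .add_star_self C
  have hHnorm : ‖H‖ ≤ 2 * ‖C‖ := by simpa [two_mul] using norm_add_le C (star C)
  have key := re_trace_le_re_trace (hs.conjugate_le_conjugate hHsa.le_algebraMap_norm_self)
  have h1 : (s * H * s).trace.re = 2 * (C * (s * s)).trace.re := by
    have : s * star C * s = (s * C * s)ᴴ := by
      simp [← star_eq_conjTranspose, star_mul, hs.star_eq, mul_assoc]
    rw [hH, mul_add, add_mul, trace_add, Complex.add_re, this, trace_conjTranspose,
      Complex.star_def, Complex.conj_re, trace_mul_cycle, trace_mul_comm, two_mul]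
  have h2 : (s * algebraMap ℝ _ ‖H‖ * s).trace.re = ‖H‖ * (s * s).trace.re := by
    simp [Algebra.algebraMap_eq_smul_one]
  have h3 : 0 ≤ (s * s).trace.re := by simpa using re_trace_le_re_trace hS
  nlinarith

lemma exists_polar (X : Matrix ι ι ℂ) :
    ∃ C : Matrix ι ι ℂ, ‖C‖ ≤ 1 ∧ X = C * CFC.abs X ∧ Cᴴ * X = CFC.abs X := by
  set a := star X * X with ha
  have ha0 : 0 ≤ a := star_mul_self_nonneg X
  have hc (f : ℝ → ℝ) : ContinuousOn f (spectrum ℝ a) := finite_real_spectrum.continuousOn f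
  have hmul (f g : ℝ → ℝ) : cfc f a * cfc g a = cfc (fun x => f x * g x) a :=
    (cfc_mul f g a (hc f) (hc g)).symm
  have hmul_id (f : ℝ → ℝ) : cfc f a * a = cfc (fun x => f x * x) a := by
    rw [cfc_mul f (fun x => x) a (hc f) (hc _), cfc_id' ℝ a]
  have hs : CFC.abs X = cfc Real.sqrt a := by
    rw [CFC.abs, CFC.sqrt_eq_real_sqrt _ ha0, cfcₙ_eq_cfc]
  -- `g = |X|⁻¹` on the support of `|X|` and `0` on its kernel, since `(√0)⁻¹ = 0`.
  set g := cfc (fun x : ℝ => (√x)⁻¹) a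
  have hgsa : star g = g := (cfc_predicate _ a : IsSelfAdjoint g)
  have hga : g * a = CFC.abs X := by
    rw [hmul_id, hs]
    exact cfc_congr fun x _ => by simp [← div_eq_inv_mul, Real.div_sqrt]
  have hstar : (X * g)ᴴ * X = g * a := by
    rw [← star_eq_conjTranspose, star_mul, hgsa, mul_assoc]
  refine ⟨X * g, ?_, ?_, hstar.trans hga⟩
  · have hCC : star (X * g) * (X * g) = cfc (fun x => √x * (√x)⁻¹) a := by
      rw [← mul_assoc, star_eq_conjTranspose, hstar, hga, hs, hmul]
    have hle : ‖star (X * g) * (X * g)‖ ≤ 1 := by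
      rw [hCC]
      refine norm_cfc_le zero_le_one fun x _ => ?_
      by_cases hx : √x = 0 <;> simp [hx]
    rw [CStarRing.norm_star_mul_self] at hle
    nlinarith [norm_nonneg (X * g)]
  · set p := 1 - g * CFC.abs X with hp
    have hpsa : star p = p := by
      rw [hp, hs, hmul]
      exact (IsSelfAdjoint.one _).sub (cfc_predicate _ a)
    have hpa : p * a = 0 := by
      rw [hp, sub_mul, one_mul, hs, hmul, hmul_id, sub_eq_zero, eq_comm]
      refine (cfc_congr fun x hx => ?_).trans (cfc_id ℝ a)
      by_cases hx0 : √x = 0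
      · simp [(Real.sqrt_eq_zero (spectrum_nonneg_of_nonneg ha0 hx)).mp hx0]
      · simp [hx0]
    have hap : a * p = 0 := by
      simpa [hpsa, ha0.isSelfAdjoint.star_eq] using congrArg star hpa
    have hXp : X * p = 0 := by
      rw [← CStarRing.star_mul_self_eq_zero_iff, star_mul, hpsa, mul_assoc, ← mul_assoc (star X),
        ← ha, hap, mul_zero]
    calc X = X - X * p := by rw [hXp, sub_zero]
      _ = X * g * CFC.abs X := by rw [hp]; noncomm_ring

end Matrix

section TraceNorm

variable {ι : Type*} [Fintype ι] [DecidableEq ι]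

lemma traceNorm_eq_re_trace_abs (A : Matrix ι ι ℂ) : traceNorm A = (CFC.abs A).trace.re := by
  have h := Matrix.posSemidef_conjTranspose_mul_self A
  rw [CFC.abs, CFC.sqrt_eq_real_sqrt _ (Matrix.nonneg_iff_posSemidef.mpr h : 0 ≤ star A * A),
    cfcₙ_eq_cfc]
  exact congrArg (fun M => M.trace.re) (h.1.cfc_eq Real.sqrt).symm

lemma traceNorm_nonneg (A : Matrix ι ι ℂ) : 0 ≤ traceNorm A := by
  simpa [traceNorm_eq_re_trace_abs] using Matrix.re_trace_le_re_trace (CFC.abs_nonneg A)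

lemma traceNorm_of_nonneg {A : Matrix ι ι ℂ} (hA : 0 ≤ A) : traceNorm A = A.trace.re := by
  rw [traceNorm_eq_re_trace_abs, CFC.abs_of_nonneg A]

@[simp]
lemma traceNorm_zero : traceNorm (0 : Matrix ι ι ℂ) = 0 := by
  simp [traceNorm_eq_re_trace_abs]

@[simp]
lemma traceNorm_neg (A : Matrix ι ι ℂ) : traceNorm (-A) = traceNorm A := by
  simp [traceNorm_eq_re_trace_abs]

lemma traceNorm_smul (c : ℂ) (A : Matrix ι ι ℂ) : traceNorm (c • A) = ‖c‖ * traceNorm A := by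
  simp [traceNorm_eq_re_trace_abs]

lemma re_trace_mul_le_norm_mul_traceNorm (B A : Matrix ι ι ℂ) :
    (B * A).trace.re ≤ ‖B‖ * traceNorm A := by
  obtain ⟨C, hC, hAC, -⟩ := A.exists_polar
  rw [traceNorm_eq_re_trace_abs]
  calc (B * A).trace.re = (B * C * CFC.abs A).trace.re := by rw [mul_assoc, ← hAC]
    _ ≤ ‖B * C‖ * (CFC.abs A).trace.re :=
      Matrix.re_trace_mul_le_of_nonneg _ (CFC.abs_nonneg A)
    _ ≤ ‖B‖ * (CFC.abs A).trace.re := by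
      gcongr
      · simpa [traceNorm_eq_re_trace_abs] using traceNorm_nonneg A
      · exact (norm_mul_le B C).trans (mul_le_of_le_one_right (norm_nonneg B) hC)

lemma traceNorm_le_of_forall_re_trace_mul_le {A : Matrix ι ι ℂ} {c : ℝ}
    (h : ∀ B : Matrix ι ι ℂ, ‖B‖ ≤ 1 → (B * A).trace.re ≤ c) : traceNorm A ≤ c := by
  obtain ⟨C, hC, -, hCA⟩ := A.exists_polar
  rw [traceNorm_eq_re_trace_abs, ← hCA]
  exact h _ (by rwa [Matrix.l2_opNorm_conjTranspose])

lemma re_trace_mul_le_traceNorm {B : Matrix ι ι ℂ} (hB : ‖B‖ ≤ 1) (A : Matrix ι ι ℂ) :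
    (B * A).trace.re ≤ traceNorm A :=
  (re_trace_mul_le_norm_mul_traceNorm B A).trans
    (mul_le_of_le_one_left (traceNorm_nonneg A) hB)

lemma traceNorm_add_le (A B : Matrix ι ι ℂ) : traceNorm (A + B) ≤ traceNorm A + traceNorm B :=
  traceNorm_le_of_forall_re_trace_mul_le fun C hC => by
    rw [mul_add, Matrix.trace_add, Complex.add_re]
    exact add_le_add (re_trace_mul_le_traceNorm hC A) (re_trace_mul_le_traceNorm hC B)

lemma traceNorm_sub_le (A B : Matrix ι ι ℂ) : traceNorm (A - B) ≤ traceNorm A + traceNorm B := by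
  simpa [sub_eq_add_neg] using traceNorm_add_le A (-B)

lemma traceNorm_sum_le {κ : Type*} (s : Finset κ) (f : κ → Matrix ι ι ℂ) :
    traceNorm (∑ a ∈ s, f a) ≤ ∑ a ∈ s, traceNorm (f a) :=
  Finset.le_sum_of_subadditive _ traceNorm_zero.le traceNorm_add_le s f

lemma traceNorm_mul_mul_le (L A R : Matrix ι ι ℂ) :
    traceNorm (L * A * R) ≤ ‖L‖ * ‖R‖ * traceNorm A :=
  traceNorm_le_of_forall_re_trace_mul_le fun B hB => by
    have hRBL : ‖R * B * L‖ ≤ ‖L‖ * ‖R‖ := by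
      calc ‖R * B * L‖ ≤ ‖R‖ * ‖B‖ * ‖L‖ := norm_mul₃_le
        _ ≤ ‖R‖ * 1 * ‖L‖ := by gcongr
        _ = ‖L‖ * ‖R‖ := by ring
    calc (B * (L * A * R)).trace.re = (R * B * L * A).trace.re := by
          rw [← mul_assoc, Matrix.trace_mul_comm, ← mul_assoc, ← mul_assoc]
      _ ≤ ‖R * B * L‖ * traceNorm A := re_trace_mul_le_norm_mul_traceNorm _ A
      _ ≤ ‖L‖ * ‖R‖ * traceNorm A := by gcongr; exact traceNorm_nonneg A

lemma traceNorm_conj_le {U : Matrix ι ι ℂ} (hU : ‖U‖ ≤ 1) (A : Matrix ι ι ℂ) :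
    traceNorm (U * A * Uᴴ) ≤ traceNorm A := by
  refine (traceNorm_mul_mul_le U A Uᴴ).trans (mul_le_of_le_one_left (traceNorm_nonneg A) ?_)
  rw [Matrix.l2_opNorm_conjTranspose]
  exact mul_le_one₀ hU (norm_nonneg U) hU

end TraceNorm

section MixedUnitary

variable {ι κ : Type*} [Fintype ι] [DecidableEq ι] [Fintype κ]

lemma traceNorm_sum_smul_conj_le {W : κ → Matrix ι ι ℂ} (hW : ∀ a, ‖W a‖ ≤ 1) {q : κ → ℝ}
    (hq0 : ∀ a, 0 ≤ q a) (hq1 : ∑ a, q a = 1) (X : Matrix ι ι ℂ) :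
    traceNorm (∑ a, (q a : ℂ) • (W a * X * (W a)ᴴ)) ≤ traceNorm X :=
  calc traceNorm (∑ a, (q a : ℂ) • (W a * X * (W a)ᴴ))
      ≤ ∑ a, q a * traceNorm (W a * X * (W a)ᴴ) := by
        refine (traceNorm_sum_le _ _).trans_eq (Finset.sum_congr rfl fun a _ => ?_)
        rw [traceNorm_smul, Complex.norm_real, Real.norm_of_nonneg (hq0 a)]
    _ ≤ ∑ a, q a * traceNorm X :=
        Finset.sum_le_sum fun a _ => mul_le_mul_of_nonneg_left (traceNorm_conj_le (hW a) X) (hq0 a)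
    _ = traceNorm X := by rw [← Finset.sum_mul, hq1, one_mul]

lemma sum_smul_conj_sub_mean (W : κ → Matrix ι ι ℂ) {q : κ → ℝ} (hq1 : ∑ a, q a = 1)
    (σ : Matrix ι ι ℂ) :
    ∑ a, (q a : ℂ) • ((W a - ∑ b, (q b : ℂ) • W b) * σ * (W a - ∑ b, (q b : ℂ) • W b)ᴴ) =
      ∑ a, (q a : ℂ) • (W a * σ * (W a)ᴴ) -
        (∑ b, (q b : ℂ) • W b) * σ * (∑ b, (q b : ℂ) • W b)ᴴ := by
  set M := ∑ b, (q b : ℂ) • W b with hM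
  have hq1' : ∑ a, (q a : ℂ) = 1 := by exact_mod_cast hq1
  have hMH : Mᴴ = ∑ a, (q a : ℂ) • (W a)ᴴ := by simp [hM, Matrix.conjTranspose_sum]
  have h1 : ∑ a, (q a : ℂ) • (W a * σ * Mᴴ) = M * σ * Mᴴ := by
    simp_rw [← smul_mul_assoc, ← Finset.sum_mul, ← hM]
  have h2 : ∑ a, (q a : ℂ) • (M * σ * (W a)ᴴ) = M * σ * Mᴴ := by
    simp_rw [← mul_smul_comm, ← Finset.mul_sum, ← hMH]
  have h3 : ∑ a, (q a : ℂ) • (M * σ * Mᴴ) = M * σ * Mᴴ := by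
    rw [← Finset.sum_smul, hq1', one_smul]
  have hexp (a : κ) : (W a - M) * σ * (W a - M)ᴴ =
      W a * σ * (W a)ᴴ - W a * σ * Mᴴ - M * σ * (W a)ᴴ + M * σ * Mᴴ := by
    rw [Matrix.conjTranspose_sub]; noncomm_ring
  simp only [hexp, smul_add, smul_sub, Finset.sum_add_distrib, Finset.sum_sub_distrib, h1, h2, h3]
  abel

lemma traceNorm_conj_sub_sum_smul_conj_le {U : Matrix ι ι ℂ} (hU : ‖U‖ ≤ 1)
    {W : κ → Matrix ι ι ℂ} (hW : ∀ a, ‖W a‖ ≤ 1) {q : κ → ℝ} (hq0 : ∀ a, 0 ≤ q a)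
    (hq1 : ∑ a, q a = 1) {σ : Matrix ι ι ℂ} (hσ : traceNorm σ ≤ 1) :
    traceNorm (U * σ * Uᴴ - ∑ a, (q a : ℂ) • (W a * σ * (W a)ᴴ)) ≤
      ∑ a, q a * ‖W a - ∑ b, (q b : ℂ) • W b‖ ^ 2 + 2 * ‖∑ b, (q b : ℂ) • W b - U‖ := by
  set M := ∑ b, (q b : ℂ) • W b
  have hMn : ‖M‖ ≤ 1 := norm_sum_smul_le_one hW hq0 hq1
  have hsplit : U * σ * Uᴴ - ∑ a, (q a : ℂ) • (W a * σ * (W a)ᴴ) =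
      (U - M) * σ * Uᴴ + M * σ * (U - M)ᴴ -
        ∑ a, (q a : ℂ) • ((W a - M) * σ * (W a - M)ᴴ) := by
    rw [sum_smul_conj_sub_mean W hq1, Matrix.conjTranspose_sub]; noncomm_ring
  have hconj (L R : Matrix ι ι ℂ) : traceNorm (L * σ * R) ≤ ‖L‖ * ‖R‖ :=
    (traceNorm_mul_mul_le L σ R).trans (mul_le_of_le_one_right (by positivity) hσ)
  have hfirst : traceNorm ((U - M) * σ * Uᴴ) ≤ ‖M - U‖ := by
    refine (hconj _ _).trans ?_
    rw [Matrix.l2_opNorm_conjTranspose, norm_sub_rev]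
    exact mul_le_of_le_one_right (norm_nonneg _) hU
  have hsecond : traceNorm (M * σ * (U - M)ᴴ) ≤ ‖M - U‖ := by
    refine (hconj _ _).trans ?_
    rw [Matrix.l2_opNorm_conjTranspose, norm_sub_rev]
    exact mul_le_of_le_one_left (norm_nonneg _) hMn
  have hvar : traceNorm (∑ a, (q a : ℂ) • ((W a - M) * σ * (W a - M)ᴴ)) ≤
      ∑ a, q a * ‖W a - M‖ ^ 2 := by
    refine (traceNorm_sum_le _ _).trans (Finset.sum_le_sum fun a _ => ?_)
    rw [traceNorm_smul, Complex.norm_real, Real.norm_of_nonneg (hq0 a), sq]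
    refine mul_le_mul_of_nonneg_left ((hconj _ _).trans_eq ?_) (hq0 a)
    rw [Matrix.l2_opNorm_conjTranspose]
  rw [hsplit]
  linarith [traceNorm_sub_le ((U - M) * σ * Uᴴ + M * σ * (U - M)ᴴ)
    (∑ a, (q a : ℂ) • ((W a - M) * σ * (W a - M)ᴴ)), traceNorm_add_le ((U - M) * σ * Uᴴ)
    (M * σ * (U - M)ᴴ)]

end MixedUnitary

lemma traceNorm_conj_prod_sub_prod_le {ι : Type*} [Fintype ι] [DecidableEq ι] {N : ℕ}
    (U : Fin N → Matrix ι ι ℂ) (hU : ∀ i, U i ∈ Matrix.unitaryGroup ι ℂ)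
    (G : Fin N → Module.End ℂ (Matrix ι ι ℂ)) (hG : ∀ i X, traceNorm (G i X) ≤ traceNorm X)
    (ε : Fin N → ℝ)
    (hε : ∀ i σ, traceNorm σ ≤ 1 → traceNorm (U i * σ * (U i)ᴴ - G i σ) ≤ ε i)
    {ρ : Matrix ι ι ℂ} (hρ : traceNorm ρ ≤ 1) :
    traceNorm ((List.ofFn U).prod * ρ * ((List.ofFn U).prod)ᴴ - (List.ofFn G).prod ρ) ≤
      ∑ i, ε i := by
  induction N with
  | zero => simp
  | succ N ih =>
    set P := (List.ofFn fun i => U i.succ).prod with hP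
    set σ := P * ρ * Pᴴ
    have hPU : P ∈ Matrix.unitaryGroup ι ℂ :=
      Submonoid.list_prod_mem _ fun A hA => by
        obtain ⟨i, rfl⟩ := List.mem_ofFn.mp hA
        exact hU i.succ
    have hσ : traceNorm σ ≤ 1 :=
      (traceNorm_conj_le (CStarRing.norm_le_one_of_mem_unitary hPU) ρ).trans hρ
    have hsplit : (List.ofFn U).prod * ρ * ((List.ofFn U).prod)ᴴ - (List.ofFn G).prod ρ =
        (U 0 * σ * (U 0)ᴴ - G 0 σ) +
          G 0 (σ - (List.ofFn fun i => G i.succ).prod ρ) := by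
      simp only [List.ofFn_succ, List.prod_cons, Module.End.mul_apply, map_sub,
        Matrix.conjTranspose_mul, ← hP, σ, Matrix.mul_assoc]
      abel
    rw [hsplit, Fin.sum_univ_succ]
    exact (traceNorm_add_le _ _).trans (add_le_add (hε 0 σ hσ) ((hG 0 _).trans
      (ih _ (fun i => hU i.succ) _ (fun i => hG i.succ) _ (fun i => hε i.succ))))

theorem stmt_5 {n N : ℕ} (k : Fin N → ℕ)
    (U : Fin N → Matrix (Fin n) (Fin n) ℂ)
    (hU : ∀ i, U i ∈ Matrix.unitaryGroup (Fin n) ℂ)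
    (W : ∀ i : Fin N, Fin (k i) → Matrix (Fin n) (Fin n) ℂ)
    (hW : ∀ i a, W i a ∈ Matrix.unitaryGroup (Fin n) ℂ)
    (q : ∀ i : Fin N, Fin (k i) → ℝ)
    (hq0 : ∀ i a, 0 ≤ q i a) (hq1 : ∀ i, ∑ a, q i a = 1)
    (Wbar : Fin N → Matrix (Fin n) (Fin n) ℂ)
    (hWbar : ∀ i, Wbar i = ∑ a, (q i a : ℂ) • W i a)
    (δ : Fin N → ℝ) (hδ : ∀ i, δ i = ∑ a, q i a * ‖W i a - Wbar i‖ ^ 2)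
    (G : Fin N → Module.End ℂ (Matrix (Fin n) (Fin n) ℂ))
    (hG : ∀ i σ, G i σ = ∑ a, (q i a : ℂ) • (W i a * σ * (W i a)ᴴ))
    (ρ : Matrix (Fin n) (Fin n) ℂ) (hρ : ρ.PosSemidef) (hρ1 : ρ.trace = 1) :
    traceNorm ((List.ofFn U).prod * ρ * ((List.ofFn U).prod)ᴴ - (List.ofFn G).prod ρ) ≤
      ∑ i, (δ i + 2 * ‖Wbar i - U i‖) := by
  have hWn (i a) : ‖W i a‖ ≤ 1 := CStarRing.norm_le_one_of_mem_unitary (hW i a)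
  have hρn : traceNorm ρ ≤ 1 := by
    rw [traceNorm_of_nonneg (Matrix.nonneg_iff_posSemidef.mpr hρ), hρ1, Complex.one_re]
  refine traceNorm_conj_prod_sub_prod_le U hU G (fun i X => ?_) _ (fun i σ hσ => ?_) hρn
  · rw [hG]
    exact traceNorm_sum_smul_conj_le (hWn i) (hq0 i) (hq1 i) X
  · rw [hG, hδ, hWbar]
    exact traceNorm_conj_sub_sum_smul_conj_le (CStarRing.norm_le_one_of_mem_unitary (hU i))
      (hWn i) (hq0 i) (hq1 i) hσ
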